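/- arXiv:1409.2843 — 2 statements merged into one kernel-verified Lean document; each statement's English description precedes it below -/
import Mathlib

section
/- Let p be a prime and J a multiset over (ZMod p)^3 with |J| = 9p - 3. Let N^k(J) count zero-sum sub-multisets of cardinality k. Then 1 - N^p(J) + N^{2p}(J) - N^{3p}(J) + N^{4p}(J) - N^{5p}(J) + N^{6p}(J) - N^{7p}(J) + N^{8p}(J) ≡ 0 (mod p). -/
/-!
Enumerate `J` by a finite type `σ` with `|σ| = 9p - 3` and apply Chevalley–Warning to the
four polynomials `∑ⱼ xⱼ ^ (p - 1)` and `∑ⱼ eⱼ(i) xⱼ ^ (p - 1)`, of total degree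
`4(p - 1) < |σ|`. As `x ^ (p - 1)` is the indicator of `x ≠ 0`, a common zero is exactly a
point whose support `S` is a zero-sum set with `p ∣ |S|`, and each `S` is the support of
`(p - 1) ^ |S| ≡ (-1) ^ |S|` points. Hence `∑ (-1) ^ |S| ≡ 0 (mod p)` over these `S`; since
`|S| < 9p`, their sizes are `mp` with `m ≤ 8`, and `(-1) ^ (mp) = (-1) ^ m`.
-/

/-- Number of zero-sum sub-multisets of `J` of cardinality `k`. -/
def N {p : ℕ} (k : ℕ) (J : Multiset (Fin 3 → ZMod p)) : ℕ :=
  (J.powerset.filter (fun T => Multiset.card T = k ∧ T.sum = 0)).card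

open Finset MvPolynomial

theorem Multiset.powerset_map {α β : Type*} (f : α → β) (s : Multiset α) :
    (s.map f).powerset = s.powerset.map (map f) := by
  induction s using Multiset.induction with
  | empty => simp
  | cons a s ih => simp [powerset_cons, ih, map_map]

theorem Finset.powerset_val_map_val {α : Type*} (s : Finset α) :
    s.powerset.val.map val = s.val.powerset := by
  simp [Finset.powerset, Multiset.map_pmap, Multiset.pmap_eq_map]

theorem Finset.card_filter_powerset_map {σ α : Type*} (f : σ → α) (s : Finset σ)
    (P : Multiset α → Prop) [DecidablePred P] :
    Multiset.card (((s.val.map f).powerset).filter P) =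
      #(s.powerset.filter fun t => P (t.val.map f)) := by
  rw [Multiset.powerset_map, ← powerset_val_map_val, Multiset.map_map, Multiset.filter_map,
    Multiset.card_map, card_def, filter_val]
  rfl

theorem N_eq_card_finset {p k : ℕ} (J : Multiset (Fin 3 → ZMod p)) :
    N k J = #{S : Finset J | #S = k ∧ ∑ x ∈ S, (x : Fin 3 → ZMod p) = 0} := by
  rw [N]
  conv_lhs => rw [← Multiset.map_univ_coe J]
  rw [card_filter_powerset_map, powerset_univ]
  simp only [Multiset.card_map, card_val]
  rfl

theorem N_zero {p : ℕ} (J : Multiset (Fin 3 → ZMod p)) : N 0 J = 1 := by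
  rw [N_eq_card_finset, card_eq_one]
  exact ⟨∅, by ext S; simp +contextual⟩

section SupportCount

variable {σ R : Type*} [Fintype σ] [Zero R] [DecidableEq R]

def supportFinset (x : σ → R) : Finset σ := {j | x j ≠ 0}

variable [DecidableEq σ] [Fintype R]

theorem card_filter_supportFinset_eq (S : Finset σ) :
    #{x : σ → R | supportFinset x = S} = (Fintype.card R - 1) ^ #S := by
  have : ({x : σ → R | supportFinset x = S} : Finset _) =
      Fintype.piFinset fun j => if j ∈ S then {0}ᶜ else {0} := by
    ext x
    simp only [supportFinset, Finset.ext_iff, mem_filter, mem_univ, true_and,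
      Fintype.mem_piFinset]
    refine forall_congr' fun j => ?_
    split_ifs <;> simp [*]
  rw [this, Fintype.card_piFinset, prod_apply_ite, prod_const, prod_const, filter_mem_eq_inter,
    univ_inter]
  simp [card_compl]

theorem card_filter_supportFinset_mem (P : Finset σ → Prop) [DecidablePred P] :
    #{x : σ → R | P (supportFinset x)} = ∑ S : Finset σ with P S, (Fintype.card R - 1) ^ #S := by
  rw [card_eq_sum_card_fiberwise (f := supportFinset) (t := {S | P S})
    fun x hx => by simpa using hx]
  refine sum_congr rfl fun S hS => ?_
  rw [← card_filter_supportFinset_eq, filter_filter]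
  congr 1
  refine filter_congr fun x _ => ?_
  simp only [mem_filter, mem_univ, true_and] at hS
  constructor
  · exact And.right
  · rintro rfl; exact ⟨hS, rfl⟩

end SupportCount

section ChevalleyWarning

variable {K σ : Type*} [Field K] [Fintype K] [DecidableEq K] [Fintype σ]

local notation "q" => Fintype.card K

theorem eval_sum_C_mul_X_pow_card_sub_one (w : σ → K) (x : σ → K) :
    eval x (∑ j, C (w j) * X j ^ (q - 1)) = ∑ j ∈ supportFinset x, w j := by
  simp only [map_sum, map_mul, eval_C, map_pow, eval_X, supportFinset, sum_filter]
  refine sum_congr rfl fun j _ => ?_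
  by_cases hj : x j = 0
  · simp [hj, zero_pow (Nat.sub_ne_zero_of_lt Fintype.one_lt_card)]
  · simp [hj, FiniteField.pow_card_sub_one_eq_one _ hj]

theorem sum_neg_one_pow_card_filter_sum_eq_zero [DecidableEq σ] {κ : Type*} [Fintype κ]
    (w : σ → κ → K) (h : Fintype.card κ * (q - 1) < Fintype.card σ) :
    ∑ S : Finset σ with ∑ j ∈ S, w j = 0, (-1 : K) ^ #S = 0 := by
  obtain ⟨p, hchar⟩ := CharP.exists K
  have : Fact p.Prime := ⟨CharP.char_is_prime K p⟩
  set f : κ → MvPolynomial σ K := fun k => ∑ j, C (w j k) * X j ^ (q - 1)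
  have hdeg : ∑ k, (f k).totalDegree < Fintype.card σ := by
    refine lt_of_le_of_lt ?_ h
    calc ∑ k, (f k).totalDegree ≤ ∑ _k : κ, (q - 1) := sum_le_sum fun k _ =>
          (totalDegree_finsetSum _ _).trans <| Finset.sup_le fun j _ =>
            (totalDegree_mul _ _).trans (by simp [totalDegree_C, totalDegree_X_pow])
      _ = Fintype.card κ * (q - 1) := by simp
  have hsol : Fintype.card {x : σ → K // ∀ k, eval x (f k) = 0} =
      ∑ S : Finset σ with ∑ j ∈ S, w j = 0, (q - 1) ^ #S := by
    rw [Fintype.card_subtype, ← card_filter_supportFinset_mem]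
    simp only [f, eval_sum_C_mul_X_pow_card_sub_one, _root_.funext_iff, Finset.sum_apply]
    rfl
  have hcast : ((q - 1 : ℕ) : K) = -1 := by
    rw [Nat.cast_sub Fintype.card_pos, FiniteField.cast_card_eq_zero, Nat.cast_one, zero_sub]
  simpa [hsol, hcast] using
    (CharP.cast_eq_zero_iff K p _).2 (char_dvd_card_solutions_of_fintype_sum_lt p hdeg)

theorem sum_neg_one_pow_card_filter_card_and_sum_eq_zero [DecidableEq σ] {ι : Type*} [Fintype ι]
    (e : σ → ι → K) (h : (Fintype.card ι + 1) * (q - 1) < Fintype.card σ) :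
    ∑ S : Finset σ with (#S : K) = 0 ∧ ∑ j ∈ S, e j = 0, (-1 : K) ^ #S = 0 := by
  -- the extra weight `1` at `none` makes `#S` the `none`-coordinate of `∑ j ∈ S, w j`
  refine Eq.trans ?_ (sum_neg_one_pow_card_filter_sum_eq_zero
    (fun j (o : Option ι) => o.elim 1 (e j)) (by rwa [Fintype.card_option]))
  refine sum_congr (filter_congr fun S _ => ?_) fun _ _ => rfl
  simp [_root_.funext_iff, Option.forall, Finset.sum_apply]

end ChevalleyWarning

section Grouping

variable {σ R : Type*} [Fintype σ] [CommRing R] [DecidableEq R]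
  (p : ℕ) [Fact p.Prime] [CharP R p]

theorem sum_neg_one_pow_card_filter_cast_card_eq_zero_eq_sum_range {M : ℕ}
    (hM : Fintype.card σ < M * p) (Q : Finset σ → Prop) [DecidablePred Q] :
    ∑ S : Finset σ with (#S : R) = 0 ∧ Q S, (-1 : R) ^ #S =
      ∑ m ∈ range M, (-1 : R) ^ m * #{S : Finset σ | #S = m * p ∧ Q S} := by
  have hp : 0 < p := (Fact.out : p.Prime).pos
  have hmaps : ∀ S ∈ ({S : Finset σ | (#S : R) = 0 ∧ Q S} : Finset _), #S / p ∈ range M := by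
    intro S _
    rw [mem_range, Nat.div_lt_iff_lt_mul hp]
    exact (card_le_univ S).trans_lt hM
  rw [← sum_fiberwise_of_maps_to hmaps]
  refine sum_congr rfl fun m _ => ?_
  have hfiber : ∀ S : Finset σ, ((#S : R) = 0 ∧ Q S) ∧ #S / p = m ↔ #S = m * p ∧ Q S := by
    intro S
    rw [CharP.cast_eq_zero_iff R p]
    constructor
    · rintro ⟨⟨hdvd, hQ⟩, rfl⟩
      exact ⟨(Nat.div_mul_cancel hdvd).symm, hQ⟩
    · rintro ⟨hS, hQ⟩
      exact ⟨⟨hS ▸ dvd_mul_left p m, hQ⟩, by rw [hS, Nat.mul_div_cancel _ hp]⟩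
  rw [filter_filter]
  calc ∑ S : Finset σ with ((#S : R) = 0 ∧ Q S) ∧ #S / p = m, (-1 : R) ^ #S
      = ∑ S : Finset σ with #S = m * p ∧ Q S, (-1 : R) ^ m := by
        refine sum_congr (filter_congr fun S _ => hfiber S) fun S hS => ?_
        rw [(mem_filter.1 hS).2.1, mul_comm, pow_mul, neg_one_pow_char]
    _ = (-1 : R) ^ m * #{S : Finset σ | #S = m * p ∧ Q S} := by
        rw [sum_const, nsmul_eq_mul, mul_comm]

end Grouping

theorem stmt_9 (p : ℕ) (hp : p.Prime) (J : Multiset (Fin 3 → ZMod p))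
    (hJ : Multiset.card J = 9 * p - 3) :
    (1 - (N p J : ℤ) + N (2 * p) J - N (3 * p) J + N (4 * p) J - N (5 * p) J
        + N (6 * p) J - N (7 * p) J + N (8 * p) J) ≡ 0 [ZMOD p] := by
  have : Fact p.Prime := ⟨hp⟩
  have hp2 := hp.two_le
  have hsum : ∑ m ∈ range 9, (-1 : ZMod p) ^ m * N (m * p) J = 0 := by
    simp_rw [N_eq_card_finset]
    rw [← sum_neg_one_pow_card_filter_cast_card_eq_zero_eq_sum_range p (by simp [hJ]; omega)]
    classical
    exact sum_neg_one_pow_card_filter_card_and_sum_eq_zero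
      (fun x : J => (x : Fin 3 → ZMod p)) (by simp [hJ, ZMod.card]; omega)
  apply (ZMod.intCast_eq_intCast_iff _ _ p).1
  simp only [sum_range_succ, range_one, sum_singleton, zero_mul, one_mul, N_zero] at hsum
  push_cast
  linear_combination hsum
end

section
/- Let p be a prime > 7 and J a multiset over (ZMod p)^3 with |J| = 6p - 3, N^p(J) = 0, and N^{2p}(J) ≡ t (mod p). Then N^{3p}(J) ≡ 3t + 10, N^{4p}(J) ≡ 3t + 15, and N^{5p}(J) ≡ t + 6 (mod p), and at most one of t, 3t+10, 3t+15, t+6 is divisible by p. -/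
open Finset MvPolynomial

theorem Multiset.powerset_map_s15 {α β : Type*} (f : α → β) (m : Multiset α) :
    (m.map f).powerset = m.powerset.map (Multiset.map f) := by
  induction m using Multiset.induction with
  | empty => simp
  | cons a m ih => simp [Multiset.powerset_cons, ih]

theorem Finset.map_val_val_powerset {α : Type*} (s : Finset α) :
    s.powerset.val.map Finset.val = s.val.powerset := by
  simp [Finset.powerset, Multiset.map_pmap, Multiset.pmap_eq_map]

theorem Finset.sum_powersetCard_sum_powerset {ι β : Type*} [DecidableEq ι] [AddCommMonoid β]
    (s : Finset ι) (m : ℕ) (h : Finset ι → β) :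
    ∑ Y ∈ s.powersetCard m, ∑ S ∈ Y.powerset, h S =
      ∑ S ∈ s.powerset with #S ≤ m, (#s - #S).choose (m - #S) • h S := by
  rw [sum_comm' (t' := s.powerset) (s' := fun S => {Y ∈ s.powersetCard m | S ⊆ Y}), sum_filter]
  · refine sum_congr rfl fun S hS => ?_
    rw [sum_const]
    split_ifs with hSm
    · rw [card_filter_powersetCard_subset S s m (mem_powerset.1 hS) hSm]
    · rw [card_eq_zero.2, zero_smul]
      refine filter_eq_empty_iff.2 fun Y hY hSY => hSm ?_
      exact (card_le_card hSY).trans (mem_powersetCard.1 hY).2.le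
  · intro Y S
    simp only [mem_powersetCard, mem_powerset, mem_filter]
    exact ⟨fun ⟨hY, hSY⟩ => ⟨⟨hY, hSY⟩, hSY.trans hY.1⟩, fun ⟨⟨hY, hSY⟩, _⟩ => ⟨hY, hSY⟩⟩

theorem card_filter_support_eq {ι R : Type*} [Fintype ι] [DecidableEq ι] [Fintype R] [Zero R]
    [DecidableEq R] (S : Finset ι) :
    #{x : ι → R | ({i | x i ≠ 0} : Finset ι) = S} = (Fintype.card R - 1) ^ #S := by
  have : ({x : ι → R | ({i | x i ≠ 0} : Finset ι) = S} : Finset _) =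
      Fintype.piFinset fun i => if i ∈ S then {0}ᶜ else {0} := by
    ext x
    simp only [mem_filter, mem_univ, true_and, Fintype.mem_piFinset, Finset.ext_iff]
    refine forall_congr' fun i => ?_
    split_ifs with hi <;> simp [hi]
  rw [this, Fintype.card_piFinset, ← prod_const, ← univ_inter S, ← prod_ite_mem]
  exact prod_congr rfl fun i _ => by split_ifs <;> simp_all [card_compl]

theorem ZMod.natCast_choose_add_mul {p : ℕ} [Fact p.Prime] {c d : ℕ} (hc : c < p) (hd : d < p)
    (a b : ℕ) : ((c + a * p).choose (d + b * p) : ZMod p) = c.choose d * a.choose b := by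
  have hp := (Fact.out : p.Prime).pos
  have h := Choose.choose_modEq_choose_mod_mul_choose_div_nat (p := p) (n := c + a * p)
    (k := d + b * p)
  rw [← ZMod.natCast_eq_natCast_iff] at h
  simpa [Nat.add_mul_mod_self_right, Nat.mod_eq_of_lt, hc, hd, Nat.add_mul_div_right,
    Nat.div_eq_of_lt, hp] using h

section ZeroSumSets

variable {p : ℕ} [Fact p.Prime] {ι κ : Type*} [DecidableEq ι] [Fintype κ]

theorem sum_neg_one_pow_card_of_sum_eq_zero [Fintype ι] (g : ι → κ → ZMod p)
    (h : Fintype.card κ * (p - 1) < Fintype.card ι) :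
    ∑ S : Finset ι with ∑ i ∈ S, g i = 0, (-1 : ZMod p) ^ #S = 0 := by
  let P : κ → MvPolynomial ι (ZMod p) := fun c => ∑ i, g i c • X i ^ (p - 1)
  have hdeg : ∑ c, (P c).totalDegree < Fintype.card ι :=
    calc ∑ c, (P c).totalDegree ≤ ∑ _c : κ, (p - 1) := sum_le_sum fun c _ =>
          totalDegree_finsetSum_le fun i _ =>
            (totalDegree_smul_le ..).trans (totalDegree_X_pow ..).le
      _ < Fintype.card ι := by simpa using h
  have hsol (x : ι → ZMod p) : (∀ c, eval x (P c) = 0) ↔ ∑ i with x i ≠ 0, g i = 0 := by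
    simp [P, ZMod.pow_card_sub_one, sum_filter, funext_iff, Finset.sum_apply, ite_apply]
  have hdvd := char_dvd_card_solutions_of_fintype_sum_lt p hdeg
  simp_rw [Fintype.card_subtype, hsol, ← ZMod.natCast_eq_zero_iff, natCast_card_filter] at hdvd
  rw [← sum_fiberwise (g := fun x : ι → ZMod p => ({i | x i ≠ 0} : Finset ι))] at hdvd
  rw [← hdvd, sum_filter]
  refine sum_congr rfl fun S _ => ?_
  have hfiber : ∀ x ∈ ({x | ({i | x i ≠ 0} : Finset ι) = S} : Finset (ι → ZMod p)),
      (if ∑ i with x i ≠ 0, g i = 0 then (1 : ZMod p) else 0) =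
        if ∑ i ∈ S, g i = 0 then 1 else 0 := fun x hx => by rw [(mem_filter.1 hx).2]
  rw [sum_congr rfl hfiber, sum_const, card_filter_support_eq, ZMod.card, nsmul_eq_mul,
    mul_ite, mul_one, mul_zero]
  simp [Nat.cast_sub (Fact.out : p.Prime).one_le]

theorem sum_powerset_neg_one_pow_card_of_sum_eq_zero (g : ι → κ → ZMod p) (Y : Finset ι)
    (h : Fintype.card κ * (p - 1) < #Y) :
    ∑ S ∈ Y.powerset with ∑ i ∈ S, g i = 0, (-1 : ZMod p) ^ #S = 0 := by
  have hY : Y.powerset =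
      (univ : Finset (Finset Y)).map (mapEmbedding (.subtype (· ∈ Y))).toEmbedding := by
    ext S
    simp only [mem_powerset, mem_map, mem_univ, true_and, RelEmbedding.coe_toEmbedding,
      mapEmbedding_apply]
    refine ⟨fun hS => ⟨S.subtype (· ∈ Y), subtype_map_of_mem hS⟩, ?_⟩
    rintro ⟨T, rfl⟩ x hx
    obtain ⟨y, -, rfl⟩ := mem_map.1 hx
    exact y.2
  rw [hY, filter_map, sum_map]
  simpa using sum_neg_one_pow_card_of_sum_eq_zero (fun i : Y => g i) (by simpa using h)

theorem sum_choose_mul_neg_one_pow_of_sum_eq_zero [Fintype ι] (g : ι → κ → ZMod p) {m : ℕ}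
    (hm : Fintype.card κ * (p - 1) < m) :
    ∑ S : Finset ι with #S ≤ m ∧ ∑ i ∈ S, g i = 0,
      ((Fintype.card ι - #S).choose (m - #S) : ZMod p) * (-1) ^ #S = 0 := by
  have h := sum_powersetCard_sum_powerset univ m
    fun S => if ∑ i ∈ S, g i = 0 then (-1 : ZMod p) ^ #S else 0
  rw [sum_eq_zero fun Y hY => ?_, powerset_univ, card_univ] at h
  · rw [h, ← filter_filter, sum_filter (s := filter _ _)]
    simp [nsmul_eq_mul]
  · rw [← sum_filter]
    exact sum_powerset_neg_one_pow_card_of_sum_eq_zero g Y ((mem_powersetCard.1 hY).2 ▸ hm)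

theorem sum_neg_one_pow_mul_choose_mul_card_sum_eq_zero [Fintype ι] (f : ι → κ → ZMod p)
    {c a r : ℕ} (hc : c < p) (hι : Fintype.card ι = c + a * p) (hr : r ≤ a)
    (hm : (Fintype.card κ + 1) * (p - 1) < c + r * p) :
    ∑ j ∈ range (r + 1), (-1 : ZMod p) ^ j * (a - j).choose (r - j) *
      #{S : Finset ι | #S = j * p ∧ ∑ i ∈ S, f i = 0} = 0 := by
  have hp := (Fact.out : p.Prime).pos
  -- the extra coordinate `1` makes `∑ i ∈ S, g i` record `#S` modulo `p`
  let g i : Option κ → ZMod p := fun o => o.elim 1 (f i)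
  have hg (S : Finset ι) : ∑ i ∈ S, g i = 0 ↔ p ∣ #S ∧ ∑ i ∈ S, f i = 0 := by
    simp [g, funext_iff, Finset.sum_apply, Option.forall, ← ZMod.natCast_eq_zero_iff]
  have h := sum_choose_mul_neg_one_pow_of_sum_eq_zero g (m := c + r * p) (by simpa using hm)
  simp_rw [hg] at h
  rw [← sum_fiberwise_of_maps_to (g := fun S => #S / p) (t := range (r + 1))] at h
  · rw [← h]
    refine sum_congr rfl fun j hj => ?_
    have hjr : j ≤ r := Nat.lt_succ_iff.1 (mem_range.1 hj)
    have hjp : j * p ≤ r * p := Nat.mul_le_mul_right p hjr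
    have hja : j * p ≤ a * p := Nat.mul_le_mul_right p (hjr.trans hr)
    have hfiber (S : Finset ι) : ((#S ≤ c + r * p ∧ p ∣ #S ∧ ∑ i ∈ S, f i = 0) ∧ #S / p = j) ↔
        (#S = j * p ∧ ∑ i ∈ S, f i = 0) := by
      constructor
      · rintro ⟨⟨-, hdvd, hS⟩, rfl⟩
        exact ⟨(Nat.div_mul_cancel hdvd).symm, hS⟩
      · rintro ⟨hS, hsum⟩
        exact ⟨⟨by omega, hS ▸ dvd_mul_left p j, hsum⟩, by rw [hS, Nat.mul_div_cancel _ hp]⟩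
    rw [filter_filter, filter_congr fun S _ => hfiber S,
      sum_congr rfl fun S hS => by rw [(mem_filter.1 hS).2.1], sum_const, nsmul_eq_mul, hι,
      show c + a * p - j * p = c + (a - j) * p by rw [Nat.sub_mul]; omega,
      show c + r * p - j * p = c + (r - j) * p by rw [Nat.sub_mul]; omega,
      ZMod.natCast_choose_add_mul hc hc, Nat.choose_self, pow_mul, ZMod.pow_card]
    push_cast
    ring
  · intro S hS
    rw [mem_range, Nat.lt_succ_iff]
    calc #S / p ≤ (c + r * p) / p := Nat.div_le_div_right (mem_filter.1 hS).2.1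
      _ = r := by rw [Nat.add_mul_div_right _ _ hp, Nat.div_eq_of_lt hc, zero_add]

end ZeroSumSets

theorem N_map_univ {p : ℕ} {ι : Type*} [Fintype ι] (f : ι → Fin 3 → ZMod p) (k : ℕ) :
    N k (univ.val.map f) = #{S : Finset ι | #S = k ∧ ∑ i ∈ S, f i = 0} := by
  rw [N, Multiset.powerset_map_s15, ← map_val_val_powerset, Multiset.map_map, Multiset.filter_map,
    Multiset.card_map, powerset_univ, card_def, filter_val]
  simp only [Function.comp_def, Multiset.card_map, card_val]
  rfl

theorem sum_neg_one_pow_mul_choose_mul_N {p : ℕ} [Fact p.Prime] {J : Multiset (Fin 3 → ZMod p)}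
    {c a r : ℕ} (hc : c < p) (hJ : Multiset.card J = c + a * p) (hr : r ≤ a)
    (hm : 4 * (p - 1) < c + r * p) :
    ∑ j ∈ range (r + 1), (-1 : ZMod p) ^ j * (a - j).choose (r - j) * N (j * p) J = 0 := by
  classical
  rw [← Multiset.map_univ_coe J]
  simp_rw [N_map_univ]
  exact sum_neg_one_pow_mul_choose_mul_card_sum_eq_zero _ hc (by rwa [Multiset.card_coe]) hr
    (by simpa using hm)

theorem at_most_one_dvd_of_seven_lt {p : ℕ} (hp : p.Prime) (hp7 : 7 < p) (t : ℤ) :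
    ∀ i j : Fin 4, i ≠ j →
      ¬((p : ℤ) ∣ ![t, 3 * t + 10, 3 * t + 15, t + 6] i ∧
        (p : ℤ) ∣ ![t, 3 * t + 10, 3 * t + 15, t + 6] j) := by
  -- every factor of `120 = 4 * 6 * 5` is below `p`
  have hp120 : ¬p ∣ 4 * 6 * 5 := by
    intro h
    rcases hp.dvd_mul.1 h with h | h
    · rcases hp.dvd_mul.1 h with h | h <;> have := Nat.le_of_dvd (by norm_num) h <;> omega
    · have := Nat.le_of_dvd (by norm_num) h; omega
  have h120 : (120 : ZMod p) ≠ 0 := by exact_mod_cast (ZMod.natCast_eq_zero_iff _ p).not.2 hp120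
  intro i j hij
  simp_rw [← ZMod.intCast_zmod_eq_zero_iff_dvd]
  fin_cases i <;> fin_cases j <;> simp at hij ⊢ <;> intro h h' <;> grind

theorem stmt_15 (p : ℕ) (hp : p.Prime) (hp7 : 7 < p)
    (J : Multiset (Fin 3 → ZMod p)) (hJ : Multiset.card J = 6 * p - 3)
    (h1 : N p J = 0) (t : ℤ) (h2 : (N (2 * p) J : ℤ) ≡ t [ZMOD p]) :
    ((N (3 * p) J : ℤ) ≡ 3 * t + 10 [ZMOD p] ∧
     (N (4 * p) J : ℤ) ≡ 3 * t + 15 [ZMOD p] ∧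
     (N (5 * p) J : ℤ) ≡ t + 6 [ZMOD p]) ∧
    ∀ i j : Fin 4, i ≠ j →
      ¬((p : ℤ) ∣ ![t, 3 * t + 10, 3 * t + 15, t + 6] i ∧
        (p : ℤ) ∣ ![t, 3 * t + 10, 3 * t + 15, t + 6] j) := by
  have := Fact.mk hp
  refine ⟨?_, at_most_one_dvd_of_seven_lt hp hp7 t⟩
  have relation (r : ℕ) (hr : r ≤ 5) (hm : 4 * (p - 1) < p - 3 + r * p) :=
    sum_neg_one_pow_mul_choose_mul_N (J := J) (by omega : p - 3 < p) (by omega) hr hm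
  have e5 := relation 5 le_rfl (by omega)
  have e4 := relation 4 (by norm_num) (by omega)
  have e3 := relation 3 (by norm_num) (by omega)
  simp only [sum_range_succ, sum_range_zero, one_mul, zero_mul, N_zero, h1] at e3 e4 e5
  norm_num [Nat.choose] at e3 e4 e5
  simp_rw [← ZMod.intCast_eq_intCast_iff] at h2 ⊢
  push_cast at h2 ⊢
  refine ⟨?_, ?_, ?_⟩
  · linear_combination -e3 + 3 * h2
  · linear_combination e4 - 2 * e3 + 3 * h2
  · linear_combination -e5 + e4 - e3 + h2
end
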